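/- For every integer g ≥ 1, ∑_{d=⌈(g+1)/2⌉}^{g+1} ((2d-g-1)^2/(g+1)^2)·C(g+1,d)^2 = (1/(g+1))·C(2g,g). -/

import Mathlib

/-!
Write `m = g + 1`. The summand `(2d - m)² C(m,d)²` is invariant under `d ↦ m - d` and vanishes
at `d = m/2`, so the sum over the upper half of the row is half the sum over the whole row.
For the whole row, `(2d - m)² = m² - 4d(m - d)`, and `d(m - d) C(m,d)² = m² C(g,d-1) C(g,d)`;
Vandermonde's identity evaluates `∑ C(m,d)² = C(2m,m)` and `∑ C(g,d-1) C(g,d) = C(2g,g+1)`,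
and the row sum collapses to `2m C(2g,g)`.
-/

open Finset

theorem Nat.sum_range_choose_mul_choose_succ (n : ℕ) :
    ∑ i ∈ range (n + 1), n.choose i * n.choose (i + 1) = (2 * n).choose (n + 1) := by
  rw [two_mul, Nat.add_choose_eq, Nat.sum_antidiagonal_succ,
    Nat.sum_antidiagonal_eq_sum_range_succ_mk, Nat.choose_succ_self, mul_zero, zero_add]
  refine sum_congr rfl fun i hi => ?_
  dsimp only
  rw [Nat.choose_symm (mem_range_succ_iff.mp hi), mul_comm]

theorem Nat.sum_range_mul_sub_mul_choose_sq (n : ℕ) :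
    ∑ d ∈ range (n + 2), d * (n + 1 - d) * (n + 1).choose d ^ 2 =
      (n + 1) ^ 2 * (2 * n).choose (n + 1) := by
  rw [sum_range_succ', ← Nat.sum_range_choose_mul_choose_succ, mul_sum]
  refine (add_eq_left.mpr (by simp)).trans (sum_congr rfl fun e _ => ?_)
  have hlow := Nat.add_one_mul_choose_eq n e
  have hup := Nat.choose_mul_succ_eq n (e + 1)
  rw [Nat.add_sub_add_right] at hup ⊢
  calc (e + 1) * (n - e) * (n + 1).choose (e + 1) ^ 2
      = ((n + 1).choose (e + 1) * (e + 1)) * ((n + 1).choose (e + 1) * (n - e)) := by ring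
    _ = (n + 1) ^ 2 * (n.choose e * n.choose (e + 1)) := by rw [← hlow, ← hup]; ring

theorem sum_range_sq_two_mul_sub_mul_choose_sq {R : Type*} [CommRing R] (n : ℕ) :
    ∑ d ∈ range (n + 2), (2 * (d : R) - n - 1) ^ 2 * ((n + 1).choose d : R) ^ 2 =
      2 * (n + 1) * ((2 * n).choose n : R) := by
  have hsplit : ∀ d ∈ range (n + 2), (2 * (d : R) - n - 1) ^ 2 * ((n + 1).choose d : R) ^ 2 =
      (n + 1) ^ 2 * ((n + 1).choose d : R) ^ 2 -
        4 * ((d * (n + 1 - d) * (n + 1).choose d ^ 2 : ℕ) : R) := fun d hd => by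
    rw [Nat.cast_mul, Nat.cast_mul, Nat.cast_sub (mem_range_succ_iff.mp hd)]
    push_cast
    ring
  have hsq : ∑ d ∈ range (n + 2), ((n + 1).choose d : R) ^ 2 = (2 * (n + 1)).choose (n + 1) := by
    simpa using congrArg (Nat.cast : ℕ → R) (Nat.sum_range_choose_sq (n + 1))
  have hcentral : ((n + 1) * (2 * (n + 1)).choose (n + 1) : R) =
      2 * (2 * n + 1) * (2 * n).choose n := by
    simpa [Nat.centralBinom_eq_two_mul_choose] using
      congrArg (Nat.cast : ℕ → R) (Nat.succ_mul_centralBinom_succ n)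
  have hshift : ((2 * n).choose (n + 1) * (n + 1) : R) = (2 * n).choose n * n := by
    have := Nat.choose_succ_right_eq (2 * n) n
    rw [show 2 * n - n = n by omega] at this
    simpa using congrArg (Nat.cast : ℕ → R) this
  rw [sum_congr rfl hsplit, sum_sub_distrib, ← mul_sum, ← mul_sum, hsq, ← Nat.cast_sum,
    Nat.sum_range_mul_sub_mul_choose_sq]
  push_cast
  linear_combination (n + 1 : R) * hcentral - 4 * (n + 1 : R) * hshift

theorem Finset.sum_range_succ_eq_two_nsmul_sum_Icc_of_symm {M : Type*} [AddCommMonoid M]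
    (f : ℕ → M) (n : ℕ) (hsymm : ∀ d ≤ n, f (n - d) = f d) (hmid : Even n → f (n / 2) = 0) :
    ∑ d ∈ range (n + 1), f d = 2 • ∑ d ∈ Icc ((n + 1) / 2) n, f d := by
  set k := (n + 1) / 2 with hk
  have hlow : ∑ d ∈ range k, f d = ∑ d ∈ Ico (n + 1 - k) (n + 1), f d := by
    have hreflect := sum_Ico_reflect f 0 (show k ≤ n + 1 by omega)
    rw [Nat.sub_zero, ← range_eq_Ico] at hreflect
    rw [← hreflect]
    exact sum_congr rfl fun d hd => (hsymm d (by grind)).symm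
  have hupp : ∑ d ∈ Ico (n + 1 - k) (n + 1), f d = ∑ d ∈ Ico k (n + 1), f d := by
    rcases Nat.even_or_odd' n with ⟨a, rfl | rfl⟩
    · have hcenter : f k = 0 := by rw [hk, ← hmid (even_two_mul a)]; congr 1; omega
      rw [sum_eq_sum_Ico_succ_bot (a := k) (by omega), hcenter, zero_add]
      congr 2
      omega
    · congr 2
      omega
  rw [← sum_range_add_sum_Ico f (by omega : k ≤ n + 1), hlow, hupp, two_nsmul,
    ← Finset.Ico_add_one_right_eq_Icc]

theorem sum_Icc_sq_two_mul_sub_mul_choose_sq {K : Type*} [Field K] [CharZero K] (n : ℕ) :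
    ∑ d ∈ Icc ((n + 2) / 2) (n + 1), (2 * (d : K) - n - 1) ^ 2 * ((n + 1).choose d : K) ^ 2 =
      (n + 1) * ((2 * n).choose n : K) := by
  have hsymm : ∀ d ≤ n + 1, (2 * ((n + 1 - d : ℕ) : K) - n - 1) ^ 2 *
      ((n + 1).choose (n + 1 - d) : K) ^ 2 =
        (2 * (d : K) - n - 1) ^ 2 * ((n + 1).choose d : K) ^ 2 := fun d hd => by
    rw [Nat.choose_symm hd, Nat.cast_sub hd]
    push_cast
    ring
  have hmid : Even (n + 1) → (2 * (((n + 1) / 2 : ℕ) : K) - n - 1) ^ 2 *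
      ((n + 1).choose ((n + 1) / 2) : K) ^ 2 = 0 := fun ⟨a, ha⟩ => by
    have hcenter : (2 * (((n + 1) / 2 : ℕ) : K) - n - 1) = 0 := by
      rw [show (n + 1) / 2 = a by omega]
      have hcast := congrArg (Nat.cast : ℕ → K) ha
      push_cast at hcast
      linear_combination -hcast
    rw [hcenter, zero_pow two_ne_zero, zero_mul]
  have hhalf := sum_range_succ_eq_two_nsmul_sum_Icc_of_symm
    (fun d => (2 * (d : K) - n - 1) ^ 2 * ((n + 1).choose d : K) ^ 2) (n + 1) hsymm hmid
  rw [sum_range_sq_two_mul_sub_mul_choose_sq, nsmul_eq_mul, Nat.cast_ofNat] at hhalf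
  linear_combination -hhalf / 2

theorem limit_linear_series_count_general (g : ℕ) :
    (∑ d ∈ Finset.Icc ((g + 2) / 2) (g + 1),
        ((2 * (d : ℚ) - (g : ℚ) - 1) ^ 2 / ((g : ℚ) + 1) ^ 2) *
          (((g + 1).choose d : ℚ)) ^ 2) =
      (1 / ((g : ℚ) + 1)) * (((2 * g).choose g : ℚ)) := by
  calc _ = (∑ d ∈ Icc ((g + 2) / 2) (g + 1),
          (2 * (d : ℚ) - g - 1) ^ 2 * ((g + 1).choose d : ℚ) ^ 2) / ((g : ℚ) + 1) ^ 2 := by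
        rw [sum_div]
        exact sum_congr rfl fun d _ => div_mul_eq_mul_div _ _ _
    _ = ((g : ℚ) + 1) * ((2 * g).choose g : ℚ) / ((g : ℚ) + 1) ^ 2 := by
        rw [sum_Icc_sq_two_mul_sub_mul_choose_sq]
    _ = _ := by field_simp

/-- ∑_{d=⌈(g+1)/2⌉}^{g+1} ((2d-g-1)²/(g+1)²)·C(g+1,d)² = (1/(g+1))·C(2g,g);
note ⌈(g+1)/2⌉ = (g+2)/2 in natural-number division. -/
theorem limit_linear_series_count (g : ℕ) (hg : 1 ≤ g) :
    (∑ d ∈ Finset.Icc ((g + 2) / 2) (g + 1),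
        ((2 * (d : ℚ) - (g : ℚ) - 1) ^ 2 / ((g : ℚ) + 1) ^ 2) *
          (((g + 1).choose d : ℚ)) ^ 2) =
      (1 / ((g : ℚ) + 1)) * (((2 * g).choose g : ℚ)) :=
  limit_linear_series_count_general g
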